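/- arXiv:1211.7348 — 2 statements merged into one kernel-verified Lean document; each statement's English description precedes it below -/
import Mathlib

section
/- For positive integers p, q, r, the symmetric matrix of size p+q+r+1 built as follows has determinant -pqr + p + q + r + 2: the matrix is block-structured with a first row/column indexed by a distinguished element and three diagonal blocks M_p, M_q, M_r (the tridiagonal matrices with 2 on the diagonal and 1 on the off-diagonals); the (1,1) entry is 2; the first row has a 1 in the first column of each block and 0 elsewhere; the first column is the transpose of the first row; all entries between different blocks are 0. -/
/-- The p×p tridiagonal matrix with 2's on the diagonal and 1's on the
super- and sub-diagonal. -/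
def Mtri (p : ℕ) : Matrix (Fin p) (Fin p) ℝ :=
  fun i j => if i = j then 2 else if (i : ℕ) + 1 = j ∨ (j : ℕ) + 1 = i then 1 else 0

/-- Whether an index of `Fin p ⊕ Fin q ⊕ Fin r` is the first index of its block. -/
def isFirst {p q r : ℕ} : Fin p ⊕ Fin q ⊕ Fin r → Prop
  | .inl i => (i : ℕ) = 0
  | .inr (.inl i) => (i : ℕ) = 0
  | .inr (.inr i) => (i : ℕ) = 0

instance {p q r : ℕ} : DecidablePred (isFirst (p := p) (q := q) (r := r)) := by
  intro x; rcases x with i | i | i <;> simp [isFirst] <;> infer_instance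

/-- The block-diagonal part `M_p ⊕ M_q ⊕ M_r`. -/
def blockMtri (p q r : ℕ) :
    Matrix (Fin p ⊕ Fin q ⊕ Fin r) (Fin p ⊕ Fin q ⊕ Fin r) ℝ
  | .inl i, .inl j => Mtri p i j
  | .inr (.inl i), .inr (.inl j) => Mtri q i j
  | .inr (.inr i), .inr (.inr j) => Mtri r i j
  | _, _ => 0

/-- The symmetrized Seifert matrix of the fiber surface of the divide `E_{p,q,r}`:
size `1+p+q+r`, entry `2` at the distinguished index `(0,0)`, entries `1` between
the distinguished index and the first index of each of the three blocks
`M_p, M_q, M_r`, the three tridiagonal blocks on the diagonal, zeros elsewhere. -/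
def SE (p q r : ℕ) :
    Matrix (Unit ⊕ (Fin p ⊕ Fin q ⊕ Fin r)) (Unit ⊕ (Fin p ⊕ Fin q ⊕ Fin r)) ℝ
  | .inl _, .inl _ => 2
  | .inl _, .inr b => if isFirst b then 1 else 0
  | .inr a, .inl _ => if isFirst a then 1 else 0
  | .inr a, .inr b => blockMtri p q r a b

/-!
Take the Schur complement of the block-diagonal part `D = M_p ⊕ M_q ⊕ M_r`, whose border
vector `e` is the indicator of the first indices of the blocks:
`det S = det D · (2 - eᵀ D⁻¹ e)`. The continuant recurrence
`det M_{n+2} = 2 det M_{n+1} - det M_n` gives `det M_n = n + 1`, and `eᵀ D⁻¹ e` is the sum of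
the corner entries `(M_n⁻¹)₀₀ = det M_{n-1} / det M_n = n / (n + 1)` over the three blocks, so
`det S = (p+1)(q+1)(r+1) (2 - p/(p+1) - q/(q+1) - r/(r+1))`.
-/

open Matrix

section Bordered

variable {α : Type*} [CommRing α] {m n : Type*} [Fintype m] [Fintype n] [DecidableEq m]
  [DecidableEq n]

theorem det_fromBlocks_replicateRow_replicateCol (a : α) (u v : n → α) (D : Matrix n n α)
    (hD : IsUnit D.det) :
    (fromBlocks (of fun _ _ => a : Matrix Unit Unit α) (replicateRow Unit v)
      (replicateCol Unit u) D).det = D.det * (a - v ⬝ᵥ D⁻¹ *ᵥ u) := by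
  have := D.invertibleOfIsUnitDet hD
  rw [det_fromBlocks₂₂, invOf_eq_nonsing_inv, Matrix.mul_assoc, ← replicateCol_mulVec,
    replicateRow_mul_replicateCol, det_unique (n := Unit)]
  rfl

theorem sumElim_dotProduct_inv_fromBlocks_mulVec_sumElim (A : Matrix m m α) (D : Matrix n n α)
    (hA : IsUnit A.det) (hD : IsUnit D.det) (u : m → α) (v : n → α) :
    Sum.elim u v ⬝ᵥ (fromBlocks A 0 0 D)⁻¹ *ᵥ Sum.elim u v = u ⬝ᵥ A⁻¹ *ᵥ u + v ⬝ᵥ D⁻¹ *ᵥ v := by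
  rw [inv_fromBlocks_zero₂₁_of_isUnit_iff _ _ _ (by simp [isUnit_iff_isUnit_det, hA, hD])]
  simp [fromBlocks_mulVec, sumElim_dotProduct_sumElim]

end Bordered

def firstIndicator (n : ℕ) : Fin n → ℝ := fun i => if (i : ℕ) = 0 then 1 else 0

theorem Mtri_submatrix_succ (n : ℕ) : (Mtri (n + 1)).submatrix Fin.succ Fin.succ = Mtri n := by
  ext i j
  simp only [Mtri, submatrix_apply, Fin.succ_inj, Fin.val_succ, add_left_inj]

theorem det_Mtri_add_two (n : ℕ) :
    (Mtri (n + 2)).det = 2 * (Mtri (n + 1)).det - (Mtri n).det := by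
  -- The `(0, 1)` minor has first column `e₀`; deleting that column and its first row leaves `M_n`.
  have hcorner : ((Mtri (n + 2)).submatrix Fin.succ (Fin.succAbove 1)).submatrix Fin.succ
      Fin.succ = Mtri n := by
    have hcomp : (Fin.succAbove 1 ∘ Fin.succ : Fin n → Fin (n + 2)) = Fin.succ ∘ Fin.succ :=
      funext (Fin.succ_succAbove_succ 0)
    rw [submatrix_submatrix, hcomp, ← submatrix_submatrix, Mtri_submatrix_succ,
      Mtri_submatrix_succ]
  have hminor : ((Mtri (n + 2)).submatrix Fin.succ (Fin.succAbove 1)).det = (Mtri n).det := by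
    rw [det_succ_column_zero, Fin.sum_univ_succ]
    simp [Mtri, Fin.ext_iff, hcorner]
  rw [det_succ_row_zero, Fin.sum_univ_succ, Fin.sum_univ_succ]
  simp [hminor, Mtri_submatrix_succ, Mtri, Fin.ext_iff, sub_eq_add_neg]

theorem det_Mtri (n : ℕ) : (Mtri n).det = n + 1 := by
  induction n using Nat.twoStepInduction with
  | zero => simp
  | one => norm_num [Mtri]
  | more n ih₀ ih₁ =>
    rw [det_Mtri_add_two, ih₀, ih₁]
    push_cast
    ring

theorem isUnit_det_Mtri (n : ℕ) : IsUnit (Mtri n).det := by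
  rw [det_Mtri]
  exact isUnit_iff_ne_zero.2 (by positivity)

theorem Mtri_inv_zero_zero (n : ℕ) : (Mtri (n + 1))⁻¹ 0 0 = (n + 1) / (n + 2) := by
  rw [inv_def, Matrix.smul_apply, adjugate_fin_succ_eq_det_submatrix, det_Mtri]
  simp [Mtri_submatrix_succ, det_Mtri, div_eq_inv_mul, add_assoc, one_add_one_eq_two]

theorem firstIndicator_dotProduct_Mtri_inv_mulVec (n : ℕ) :
    firstIndicator n ⬝ᵥ (Mtri n)⁻¹ *ᵥ firstIndicator n = n / (n + 1) := by
  cases n with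
  | zero => simp
  | succ n =>
    have hsingle : firstIndicator (n + 1) = Pi.single 0 1 := by
      ext i
      simp [firstIndicator, Pi.single_apply]
    rw [hsingle, mulVec_single_one, single_dotProduct, one_mul, col_apply, Mtri_inv_zero_zero]
    push_cast
    ring

theorem blockMtri_eq_fromBlocks (p q r : ℕ) :
    blockMtri p q r = fromBlocks (Mtri p) 0 0 (fromBlocks (Mtri q) 0 0 (Mtri r)) := by
  ext (i | i | i) (j | j | j) <;> rfl

theorem SE_eq_fromBlocks (p q r : ℕ) :
    SE p q r = fromBlocks (of fun _ _ => 2)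
      (replicateRow Unit
        (Sum.elim (firstIndicator p) (Sum.elim (firstIndicator q) (firstIndicator r))))
      (replicateCol Unit
        (Sum.elim (firstIndicator p) (Sum.elim (firstIndicator q) (firstIndicator r))))
      (blockMtri p q r) := by
  ext (_ | i | i | i) (_ | j | j | j) <;> simp [SE, isFirst, firstIndicator]

theorem det_SE_general (p q r : ℕ) :
    (SE p q r).det = -(p * q * r : ℝ) + p + q + r + 2 := by
  have hqr : IsUnit (fromBlocks (Mtri q) 0 0 (Mtri r)).det := by
    rw [det_fromBlocks_zero₂₁]
    exact (isUnit_det_Mtri q).mul (isUnit_det_Mtri r)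
  have hpqr : IsUnit (fromBlocks (Mtri p) 0 0 (fromBlocks (Mtri q) 0 0 (Mtri r))).det := by
    rw [det_fromBlocks_zero₂₁]
    exact (isUnit_det_Mtri p).mul hqr
  rw [SE_eq_fromBlocks, blockMtri_eq_fromBlocks,
    det_fromBlocks_replicateRow_replicateCol _ _ _ _ hpqr,
    sumElim_dotProduct_inv_fromBlocks_mulVec_sumElim _ _ (isUnit_det_Mtri p) hqr,
    sumElim_dotProduct_inv_fromBlocks_mulVec_sumElim _ _ (isUnit_det_Mtri q) (isUnit_det_Mtri r),
    det_fromBlocks_zero₂₁, det_fromBlocks_zero₂₁]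
  simp only [firstIndicator_dotProduct_Mtri_inv_mulVec, det_Mtri]
  field_simp
  ring

theorem det_SE (p q r : ℕ) (hp : 0 < p) (hq : 0 < q) (hr : 0 < r) :
    (SE p q r).det = -(p * q * r : ℝ) + p + q + r + 2 :=
  det_SE_general p q r
end

section
/- For positive integers p, q, r, the quantity -pqr + p + q + r + 2 is positive if and only if, up to permutation of (p,q,r), either p = q = 1, or (p,q) = (1,2) and r ∈ {2,3,4}. -/
/-! Sort the triple so that `a ≤ b ≤ c`. If `a ≥ 2` then `abc ≥ 4c > a + b + c + 2`, so `a = 1`,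
and the inequality becomes `(b - 1)(c - 1) < 4`, leaving `b = 1`, or `b = 2` and `c ≤ 4`. -/

theorem Multiset.exists_triple_eq_of_le {α : Type*} [LinearOrder α] (x y z : α) :
    ∃ a b c : α, ({a, b, c} : Multiset α) = {x, y, z} ∧ a ≤ b ∧ b ≤ c := by
  set s : Multiset α := {x, y, z}
  have hlen : (s.sort (· ≤ ·)).length = 3 := by simp [s]
  match hl : s.sort (· ≤ ·), hlen with
  | [a, b, c], _ =>
    have hsorted := s.pairwise_sort (· ≤ ·)
    rw [hl] at hsorted
    refine ⟨a, b, c, ?_, ?_, ?_⟩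
    · rw [← s.sort_eq (· ≤ ·), hl]; rfl
    · simp_all
    · simp_all

theorem mul_mul_lt_add_add_add_two_iff_of_multiset_eq {a b c p q r : ℕ}
    (h : ({a, b, c} : Multiset ℕ) = {p, q, r}) :
    a * b * c < a + b + c + 2 ↔ p * q * r < p + q + r + 2 := by
  have hprod := congrArg Multiset.prod h
  have hsum := congrArg Multiset.sum h
  simp only [Multiset.insert_eq_cons, Multiset.prod_cons, Multiset.prod_singleton,
    Multiset.sum_cons, Multiset.sum_singleton] at hprod hsum
  rw [mul_assoc, hprod, ← mul_assoc, add_assoc a, hsum, ← add_assoc]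

theorem eq_one_of_mul_mul_lt_of_le {a b c : ℕ} (ha : 0 < a) (hab : a ≤ b) (hbc : b ≤ c)
    (h : a * b * c < a + b + c + 2) : a = 1 := by
  by_contra ha1
  have : 2 * 2 * c ≤ a * b * c := by gcongr <;> omega
  omega

theorem small_of_mul_mul_lt_of_le {a b c : ℕ} (ha : 0 < a) (hab : a ≤ b) (hbc : b ≤ c)
    (h : a * b * c < a + b + c + 2) :
    (a = 1 ∧ b = 1) ∨ (a = 1 ∧ b = 2 ∧ (c = 2 ∨ c = 3 ∨ c = 4)) := by
  obtain rfl := eq_one_of_mul_mul_lt_of_le ha hab hbc h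
  have hb : b < 3 := by nlinarith
  interval_cases b <;> omega

theorem neg_pqr_pos_iff (p q r : ℕ) (hp : 0 < p) (hq : 0 < q) (hr : 0 < r) :
    (0 : ℤ) < -(p * q * r : ℤ) + p + q + r + 2 ↔
      ∃ a b c : ℕ, ({a, b, c} : Multiset ℕ) = {p, q, r} ∧
        ((a = 1 ∧ b = 1) ∨ (a = 1 ∧ b = 2 ∧ (c = 2 ∨ c = 3 ∨ c = 4))) := by
  have hnat : (0 : ℤ) < -(p * q * r : ℤ) + p + q + r + 2 ↔ p * q * r < p + q + r + 2 := by
    zify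
    constructor <;> intro h <;> linarith
  rw [hnat]
  constructor
  · intro h
    obtain ⟨a, b, c, hm, hab, hbc⟩ := Multiset.exists_triple_eq_of_le p q r
    have ha : a ∈ ({p, q, r} : Multiset ℕ) := hm ▸ Multiset.mem_cons_self a _
    have ha_pos : 0 < a := by
      simp only [Multiset.insert_eq_cons, Multiset.mem_cons, Multiset.mem_singleton] at ha
      omega
    exact ⟨a, b, c, hm, small_of_mul_mul_lt_of_le ha_pos hab hbc
      ((mul_mul_lt_add_add_add_two_iff_of_multiset_eq hm).2 h)⟩
  · rintro ⟨a, b, c, hm, hsmall⟩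
    rw [← mul_mul_lt_add_add_add_two_iff_of_multiset_eq hm]
    rcases hsmall with ⟨rfl, rfl⟩ | ⟨rfl, rfl, rfl | rfl | rfl⟩ <;> omega
end
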